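/- arXiv:math/0402182 — 2 statements merged into one kernel-verified Lean document; each statement's English description precedes it below -/
import Mathlib

section
/- For all natural numbers m and k and any real σ > 1, the binomial coefficient satisfies C(m+2k, 2k) · σ^{-m} ≤ (σ^{2k} / (2k)!) · (2k / ln σ)^{2k} · e^{-2k}. -/
lemma key_pow_exp (n : ℕ) (t : ℝ) (ht : 0 ≤ t) :
    t ^ n * Real.exp (-t) ≤ (n : ℝ) ^ n * Real.exp (-(n : ℝ)) := by
  rcases Nat.eq_zero_or_pos n with hn | hn
  · subst hn
    simp only [pow_zero, one_mul, Nat.cast_zero, neg_zero, Real.exp_zero]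
    exact Real.exp_le_one_iff.mpr (by linarith)
  rcases eq_or_lt_of_le ht with h0 | h0
  · rw [← h0, zero_pow (by omega : n ≠ 0), zero_mul]
    positivity
  · have hn' : (0:ℝ) < n := by positivity
    have e1 : t ^ n = Real.exp ((n : ℝ) * Real.log t) := by
      rw [Real.exp_nat_mul, Real.exp_log h0]
    have e2 : (n:ℝ) ^ n = Real.exp ((n : ℝ) * Real.log n) := by
      rw [Real.exp_nat_mul, Real.exp_log hn']
    rw [e1, e2, ← Real.exp_add, ← Real.exp_add, Real.exp_le_exp]
    have hlog : Real.log (t / n) ≤ t / n - 1 :=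
      Real.log_le_sub_one_of_pos (by positivity)
    have h1 : (n:ℝ) * Real.log (t/n) ≤ (n:ℝ) * (t/n - 1) :=
      mul_le_mul_of_nonneg_left hlog hn'.le
    have h2 : (n:ℝ) * (t/n - 1) = t - n := by field_simp
    rw [Real.log_div h0.ne' hn'.ne', mul_sub, h2] at h1
    linarith

/-- For all naturals `m`, `k` and any real `σ > 1`,
`C(m+2k, 2k) · σ^{-m} ≤ (σ^{2k} / (2k)!) · (2k / ln σ)^{2k} · e^{-2k}`. -/
theorem stmt_1 (m k : ℕ) (σ : ℝ) (hσ : 1 < σ) :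
    (Nat.choose (m + 2 * k) (2 * k) : ℝ) * σ ^ (-(m : ℝ)) ≤
      σ ^ (2 * k) / (Nat.factorial (2 * k)) *
        ((2 * k : ℝ) / Real.log σ) ^ (2 * k) * Real.exp (-(2 * k : ℝ)) := by
  have hσ0 : (0:ℝ) < σ := by linarith
  have hl : 0 < Real.log σ := Real.log_pos hσ
  set n := 2 * k with hn
  have hc : (Nat.choose (m + n) n : ℝ) ≤ ((m + n : ℕ) : ℝ) ^ n / (Nat.factorial n) := by
    have := Nat.choose_le_pow_div (α := ℝ) n (m + n)
    simpa using this
  have hrpow : σ ^ (-(m : ℝ)) = Real.exp (-(m:ℝ) * Real.log σ) := by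
    rw [Real.rpow_def_of_pos hσ0, mul_comm]
  have hσn : σ ^ n = Real.exp ((n:ℝ) * Real.log σ) := by
    rw [Real.exp_nat_mul, Real.exp_log hσ0]
  have main : ((m + n : ℕ) : ℝ) ^ n * Real.exp (-(((m + n : ℕ):ℝ) * Real.log σ)) ≤
      ((n:ℝ) / Real.log σ) ^ n * Real.exp (-(n:ℝ)) := by
    have hk := key_pow_exp n (((m + n : ℕ):ℝ) * Real.log σ) (by positivity)
    have h2 : ((m + n : ℕ) : ℝ) ^ n
        = (((m + n : ℕ):ℝ) * Real.log σ) ^ n / (Real.log σ) ^ n := by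
      rw [mul_pow, mul_div_assoc, div_self (by positivity), mul_one]
    rw [h2, div_pow, div_mul_eq_mul_div, div_mul_eq_mul_div]
    gcongr
  calc (Nat.choose (m + n) n : ℝ) * σ ^ (-(m : ℝ))
      ≤ ((m + n : ℕ) : ℝ) ^ n / (Nat.factorial n) * σ ^ (-(m : ℝ)) := by
        gcongr
    _ = σ ^ n / (Nat.factorial n) *
        (((m + n : ℕ) : ℝ) ^ n * Real.exp (-(((m + n : ℕ):ℝ) * Real.log σ))) := by
        rw [hrpow, hσn]
        have : Real.exp ((n:ℝ) * Real.log σ) * Real.exp (-(((m + n : ℕ):ℝ) * Real.log σ))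
            = Real.exp (-(m:ℝ) * Real.log σ) := by
          rw [← Real.exp_add]
          congr 1
          push_cast
          ring
        rw [← this]
        ring
    _ ≤ σ ^ n / (Nat.factorial n) * (((n:ℝ) / Real.log σ) ^ n * Real.exp (-(n:ℝ))) := by
        gcongr
    _ = σ ^ n / (Nat.factorial n) * ((n:ℝ) / Real.log σ) ^ n * Real.exp (-(n:ℝ)) := by
        ring
    _ = σ ^ (2*k) / (Nat.factorial (2*k)) * ((2 * k : ℝ) / Real.log σ) ^ (2*k)
        * Real.exp (-(2 * k : ℝ)) := by
        rw [hn]; push_cast; ring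
end

section
/- Let X = M ρ^n x^{n+1}/(1-ρx) ∂_x with n ≥ 2 and Y = N ρ^r x^{r+1}/(1-ρx)^α ∂_x (all positive). Then for every integer k ≥ 1, the k-fold iterate satisfies X^k Y ≪ (νM)^k N ρ^{kn+r} x^{kn+r+1}/(1-ρx)^{α+2k} · (r+1)(n+r+1)⋯((k-1)n+r+1) ∂_x, where ν = 1 in the one-variable case. -/
/-- Taylor coefficient sequence of `C · x^s / (1-ρx)^α` (for `α ≥ 1`). -/
noncomputable def coefF (C ρ : ℝ) (s α : ℕ) : ℕ → ℝ := fun m =>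
  if s ≤ m then C * (Nat.choose (m - s + (α - 1)) (α - 1)) * ρ ^ (m - s) else 0

/-- Coefficient sequence of `f · g'` (action of `f ∂ₓ` on `g ∂ₓ`). -/
noncomputable def applyVF (f g : ℕ → ℝ) : ℕ → ℝ := fun m =>
  ∑ i ∈ Finset.range (m + 1), f i * ((m - i + 1 : ℕ) : ℝ) * g (m - i + 1)

lemma coefF_nonneg (C ρ : ℝ) (hC : 0 ≤ C) (hρ : 0 ≤ ρ) (s α m : ℕ) :
    0 ≤ coefF C ρ s α m := by
  unfold coefF
  split_ifs with h
  · positivity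
  · exact le_refl 0

lemma coefF_congr {C C' : ℝ} (ρ : ℝ) (s α : ℕ) (h : C = C') (m : ℕ) :
    coefF C ρ s α m = coefF C' ρ s α m := by rw [h]

lemma applyVF_mono (f g h : ℕ → ℝ) (hf : ∀ i, 0 ≤ f i) (hgh : ∀ i, g i ≤ h i) (m : ℕ) :
    applyVF f g m ≤ applyVF f h m := by
  unfold applyVF
  refine Finset.sum_le_sum fun i _ => ?_
  have h1 : 0 ≤ f i * ((m - i + 1 : ℕ) : ℝ) := by
    have := hf i; positivity
  exact mul_le_mul_of_nonneg_left (hgh _) h1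

/-- Key combinatorial inequality. -/
lemma sumA (s b : ℕ) (hb : b + 1 ≤ s) : ∀ T : ℕ,
    ∑ t ∈ Finset.range (T + 1), (t + s) * Nat.choose (t + b) b
      ≤ s * Nat.choose (T + b + 2) (b + 2) := by
  intro T
  induction T with
  | zero => simp
  | succ T ih =>
    rw [Finset.sum_range_succ]
    have key : (T + 1 + s) * Nat.choose (T + 1 + b) b ≤ s * Nat.choose (T + b + 2) (b + 1) := by
      have h1 : (T + b + 2) * Nat.choose (T + b + 1) b
          = Nat.choose (T + b + 2) (b + 1) * (b + 1) := by
        have := Nat.add_one_mul_choose_eq (T + b + 1) b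
        simpa [Nat.succ_eq_add_one] using this
      apply Nat.le_of_mul_le_mul_left _ (show 0 < b + 1 by omega)
      have h2 : (b + 1) * (s * Nat.choose (T + b + 2) (b + 1))
          = s * ((T + b + 2) * Nat.choose (T + b + 1) b) := by
        rw [h1]; ring
      rw [h2]
      have h3 : Nat.choose (T + 1 + b) b = Nat.choose (T + b + 1) b := by
        congr 1; omega
      rw [h3]
      have h4 : (b + 1) * ((T + 1 + s) * Nat.choose (T + b + 1) b)
          = ((T + 1 + s) * (b + 1)) * Nat.choose (T + b + 1) b := by ring
      have h5 : s * ((T + b + 2) * Nat.choose (T + b + 1) b)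
          = (s * (T + b + 2)) * Nat.choose (T + b + 1) b := by ring
      rw [h4, h5]
      apply Nat.mul_le_mul_right
      have : (T + 1) * (b + 1) ≤ (T + 1) * s := Nat.mul_le_mul_left _ hb
      nlinarith
    have hsplit : Nat.choose (T + 1 + b + 2) (b + 2)
        = Nat.choose (T + b + 2) (b + 1) + Nat.choose (T + b + 2) (b + 2) := by
      have h := Nat.choose_succ_succ (T + b + 2) (b + 1)
      have he : T + 1 + b + 2 = T + b + 2 + 1 := by omega
      rw [he, h]
    calc ∑ t ∈ Finset.range (T + 1), (t + s) * Nat.choose (t + b) b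
          + (T + 1 + s) * Nat.choose (T + 1 + b) b
        ≤ s * Nat.choose (T + b + 2) (b + 2) + s * Nat.choose (T + b + 2) (b + 1) :=
          Nat.add_le_add ih key
      _ = s * Nat.choose (T + 1 + b + 2) (b + 2) := by rw [hsplit]; ring

/-- Single-step majorization. -/
lemma step (M C ρ : ℝ) (hM : 0 ≤ M) (hC : 0 ≤ C) (hρ : 0 ≤ ρ)
    (n s β : ℕ) (hβ : 1 ≤ β) (hβs : β ≤ s) (m : ℕ) :
    applyVF (coefF (M * ρ ^ n) ρ (n + 1) 1) (coefF C ρ s β) m ≤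
      coefF (M * C * (s : ℝ) * ρ ^ n) ρ (s + n) (β + 2) m := by
  unfold applyVF
  by_cases hm : s + n ≤ m
  · -- main case
    set T := m - s - n with hT
    have hTm : m = s + n + T := by omega
    have hterm : ∀ i ∈ Finset.range (m + 1),
        coefF (M * ρ ^ n) ρ (n + 1) 1 i * ((m - i + 1 : ℕ) : ℝ) * coefF C ρ s β (m - i + 1)
          = if i ∈ Finset.Ico (n + 1) (m + 2 - s) then
              (M * C * ρ ^ (m - s)) *
                (((m - i + 1) * Nat.choose (m - i + 1 - s + (β - 1)) (β - 1) : ℕ) : ℝ)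
            else 0 := by
      intro i hi
      simp only [Finset.mem_range] at hi
      rw [coefF, coefF]
      by_cases h1 : n + 1 ≤ i
      · by_cases h2 : s ≤ m - i + 1
        · rw [if_pos h1, if_pos h2,
            if_pos (Finset.mem_Ico.mpr ⟨h1, by omega⟩)]
          have hpow : ρ ^ n * ρ ^ (i - (n + 1)) * ρ ^ (m - i + 1 - s) = ρ ^ (m - s) := by
            rw [← pow_add, ← pow_add]
            congr 1
            omega
          have hch : (1 : ℕ) - 1 = 0 := rfl
          simp only [hch, Nat.choose_zero_right, Nat.cast_one, Nat.cast_mul]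
          rw [← hpow]; ring
        · rw [if_pos h1, if_neg h2,
            if_neg (fun hmem => h2 (by have := Finset.mem_Ico.mp hmem; omega))]
          ring
      · rw [if_neg h1,
          if_neg (fun hmem => h1 (Finset.mem_Ico.mp hmem).1)]
        ring
    rw [Finset.sum_congr rfl hterm, Finset.sum_ite_mem]
    have hinter : Finset.range (m + 1) ∩ Finset.Ico (n + 1) (m + 2 - s)
        = Finset.Ico (n + 1) (m + 2 - s) := by
      apply Finset.inter_eq_right.mpr
      intro i hi
      simp only [Finset.mem_Ico] at hi
      simp only [Finset.mem_range]
      omega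
    rw [hinter, Finset.sum_Ico_eq_sum_range]
    have hlen : m + 2 - s - (n + 1) = T + 1 := by omega
    rw [hlen]
    have hterm2 : ∀ j ∈ Finset.range (T + 1),
        (M * C * ρ ^ (m - s)) *
            (((m - (n + 1 + j) + 1) * Nat.choose (m - (n + 1 + j) + 1 - s + (β - 1)) (β - 1) : ℕ) : ℝ)
          = (M * C * ρ ^ (m - s)) *
            ((((T - j) + s) * Nat.choose ((T - j) + (β - 1)) (β - 1) : ℕ) : ℝ) := by
      intro j hj
      simp only [Finset.mem_range] at hj
      have e1 : m - (n + 1 + j) + 1 = (T - j) + s := by omega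
      have e2 : m - (n + 1 + j) + 1 - s = T - j := by omega
      rw [e2, e1]
    rw [Finset.sum_congr rfl hterm2, ← Finset.mul_sum, ← Nat.cast_sum]
    have hreflect : ∑ j ∈ Finset.range (T + 1),
          ((T - j) + s) * Nat.choose ((T - j) + (β - 1)) (β - 1)
        = ∑ t ∈ Finset.range (T + 1), (t + s) * Nat.choose (t + (β - 1)) (β - 1) := by
      have := Finset.sum_range_reflect
        (fun t => (t + s) * Nat.choose (t + (β - 1)) (β - 1)) (T + 1)
      simpa using this
    rw [hreflect]
    have hbound := sumA s (β - 1) (by omega) T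
    have hρpos : (0 : ℝ) ≤ M * C * ρ ^ (m - s) := by positivity
    calc (M * C * ρ ^ (m - s)) *
          ((∑ t ∈ Finset.range (T + 1), (t + s) * Nat.choose (t + (β - 1)) (β - 1) : ℕ) : ℝ)
        ≤ (M * C * ρ ^ (m - s)) * ((s * Nat.choose (T + (β - 1) + 2) ((β - 1) + 2) : ℕ) : ℝ) := by
          apply mul_le_mul_of_nonneg_left _ hρpos
          exact_mod_cast hbound
      _ = coefF (M * C * (s : ℝ) * ρ ^ n) ρ (s + n) (β + 2) m := by
          rw [coefF, if_pos hm]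
          have e1 : T + (β - 1) + 2 = m - (s + n) + (β + 2 - 1) := by omega
          have e2 : (β - 1) + 2 = β + 2 - 1 := by omega
          have e3 : m - s = n + (m - (s + n)) := by omega
          rw [e1, e2, e3, pow_add]
          push_cast
          ring
  · -- degenerate case: everything is 0
    rw [coefF, if_neg hm]
    apply le_of_eq
    apply Finset.sum_eq_zero
    intro i hi
    simp only [Finset.mem_range] at hi
    by_cases h1 : n + 1 ≤ i
    · have h2 : ¬ s ≤ m - i + 1 := by omega
      rw [coefF, coefF]
      simp only [h2, if_false]
      ring
    · rw [coefF, coefF]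
      simp only [h1, if_false]
      ring

lemma main_aux (M N ρ : ℝ) (hM : 0 < M) (hN : 0 < N) (hρ : 0 < ρ)
    (n r α : ℕ) (hα : 1 ≤ α) :
    ∀ k : ℕ, (∀ j, j < k → α + 2 * j ≤ j * n + r + 1) →
    ∀ m : ℕ,
      (fun g => applyVF (coefF (M * ρ ^ n) ρ (n + 1) 1) g)^[k]
          (coefF (N * ρ ^ r) ρ (r + 1) α) m ≤
        coefF (M ^ k * N * ρ ^ (k * n + r) *
            ∏ j ∈ Finset.range k, ((j * n + r + 1 : ℕ) : ℝ))
          ρ (k * n + r + 1) (α + 2 * k) m := by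
  intro k
  induction k with
  | zero =>
    intro _ m
    simp only [Function.iterate_zero, id_eq, Nat.zero_mul, Finset.range_zero,
      Finset.prod_empty, pow_zero, Nat.zero_mul, Nat.mul_zero, Nat.zero_add,
      Nat.add_zero, one_mul, mul_one]
    exact le_refl _
  | succ k ih =>
    intro hcompat m
    have hcompat' : ∀ j, j < k → α + 2 * j ≤ j * n + r + 1 := fun j hj =>
      hcompat j (by omega)
    rw [Function.iterate_succ_apply']
    have hfpos : ∀ i, 0 ≤ coefF (M * ρ ^ n) ρ (n + 1) 1 i := fun i =>
      coefF_nonneg _ _ (by positivity) hρ.le _ _ _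
    set Ck : ℝ := M ^ k * N * ρ ^ (k * n + r) *
        ∏ j ∈ Finset.range k, ((j * n + r + 1 : ℕ) : ℝ) with hCk
    have hCkpos : 0 ≤ Ck := by
      rw [hCk]
      have : ∀ j ∈ Finset.range k, (0:ℝ) ≤ ((j * n + r + 1 : ℕ) : ℝ) := fun j _ => by positivity
      have hprod : (0:ℝ) ≤ ∏ j ∈ Finset.range k, ((j * n + r + 1 : ℕ) : ℝ) :=
        Finset.prod_nonneg this
      positivity
    have step1 : applyVF (coefF (M * ρ ^ n) ρ (n + 1) 1)
          ((fun g => applyVF (coefF (M * ρ ^ n) ρ (n + 1) 1) g)^[k]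
            (coefF (N * ρ ^ r) ρ (r + 1) α)) m
        ≤ applyVF (coefF (M * ρ ^ n) ρ (n + 1) 1)
            (coefF Ck ρ (k * n + r + 1) (α + 2 * k)) m :=
      applyVF_mono _ _ _ hfpos (ih hcompat') m
    have step2 := step M Ck ρ hM.le hCkpos hρ.le n (k * n + r + 1) (α + 2 * k)
      (by omega) (hcompat k (by omega)) m
    refine le_trans step1 (le_trans step2 (le_of_eq ?_))
    have e1 : k * n + r + 1 + n = (k + 1) * n + r + 1 := by ring
    have e2 : α + 2 * k + 2 = α + 2 * (k + 1) := by omega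
    rw [e1, e2]
    apply coefF_congr
    rw [hCk, Finset.prod_range_succ]
    have e3 : (k + 1) * n + r = (k * n + r) + n := by ring
    rw [e3, pow_add, pow_succ]
    push_cast
    ring

/-- Let `X = M ρ^n x^{n+1}/(1-ρx) ∂ₓ` with `n ≥ 2`, and
`Y = N ρ^r x^{r+1}/(1-ρx)^α ∂ₓ` (all positive, `α ≥ 1`), with the stepwise
compatibility condition `j n + r + 1 ≥ α + 2j` for `j < k`.  Then for `k ≥ 1`,
`X^k Y ≪ (νM)^k N ρ^{kn+r} (r+1)(n+r+1)⋯((k-1)n+r+1)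
x^{kn+r+1}/(1-ρx)^{α+2k} ∂ₓ`, where `ν = 1` in the one-variable case. -/
theorem stmt_17 (M N ρ ν : ℝ) (hM : 0 < M) (hN : 0 < N) (hρ : 0 < ρ)
    (hν : ν = 1) (n r α k : ℕ) (hn : 2 ≤ n) (hα : 1 ≤ α) (hk : 1 ≤ k)
    (hcompat : ∀ j, j < k → α + 2 * j ≤ j * n + r + 1) :
    ∀ m : ℕ,
      (fun g => applyVF (coefF (M * ρ ^ n) ρ (n + 1) 1) g)^[k]
          (coefF (N * ρ ^ r) ρ (r + 1) α) m ≤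
        coefF ((ν * M) ^ k * N * ρ ^ (k * n + r) *
            ∏ j ∈ Finset.range k, ((j * n + r + 1 : ℕ) : ℝ))
          ρ (k * n + r + 1) (α + 2 * k) m := by
  subst hν
  simp only [one_mul]
  exact main_aux M N ρ hM hN hρ n r α hα k hcompat
end
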